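/- arXiv:2605.11983 — 2 statements merged into one kernel-verified Lean document; each statement's English description precedes it below -/
import Mathlib

section
/- Greedy farthest-first traversal is a 2-approximation for metric k-center: Let (V, d) be a finite metric space and k ≤ |V|. Let A ⊆ V with |A| = k be produced by farthest-first traversal (start from an arbitrary point; repeatedly add the point of V farthest from the current set). Then the coverage radius r_A = max_{u∈V} min_{v∈A} d(u,v) satisfies r_A ≤ 2 r*, where r* = min over all C ⊆ V with |C| = k of max_{u∈V} min_{v∈C} d(u,v). -/
/-!
Let `R` be the covering radius of `C` and give every point `a i` of the traversal a centre
`c i ∈ C` within `R`. Fix `u` and let `cu ∈ C` be its centre. If `cu = c i` for some `i`, then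
`d(u, a i) ≤ d(u, cu) + d(cu, a i) ≤ 2R`. Otherwise the `k` points `a i` share the at most
`k - 1` centres `C \ {cu}`, so some `a j` and a later `a i` have the same centre and
`d(a i, a j) ≤ 2R`; since `a i` was chosen farthest from its predecessors, `u` is at distance at
most `d(a i, a j)` from them.
-/

open Finset

section

variable {V : Type*} [PseudoEMetricSpace V]

def IsFarthestFirstTraversal {k : ℕ} (a : Fin k → V) : Prop :=
  ∀ i : Fin k, ∀ u : V,
    ((univ.filter fun j => j < i).inf fun j => edist u (a j)) ≤
      ((univ.filter fun j => j < i).inf fun j => edist (a i) (a j))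

namespace IsFarthestFirstTraversal

variable {k : ℕ} {a : Fin k → V}

theorem inf_edist_le_edist (ha : IsFarthestFirstTraversal a) {i j : Fin k} (hji : j < i)
    (u : V) : (univ.inf fun l => edist u (a l)) ≤ edist (a i) (a j) :=
  calc (univ.inf fun l => edist u (a l))
      ≤ (univ.filter fun l => l < i).inf fun l => edist u (a l) := inf_mono (filter_subset _ _)
    _ ≤ (univ.filter fun l => l < i).inf fun l => edist (a i) (a l) := ha i u
    _ ≤ edist (a i) (a j) := inf_le (by simpa using hji)

theorem inf_edist_le_two_mul (ha : IsFarthestFirstTraversal a) {C : Finset V} (hC : #C ≤ k)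
    {R : ENNReal} (hcover : ∀ x, ∃ c ∈ C, edist x c ≤ R) (u : V) :
    (univ.inf fun i => edist u (a i)) ≤ 2 * R := by
  classical
  choose c hcC hc using fun i => hcover (a i)
  obtain ⟨cu, hcuC, hcu⟩ := hcover u
  by_cases hshared : ∃ i, c i = cu
  · obtain ⟨i, rfl⟩ := hshared
    calc (univ.inf fun i => edist u (a i))
        ≤ edist u (a i) := inf_le (mem_univ i)
      _ ≤ edist u (c i) + edist (c i) (a i) := edist_triangle _ _ _
      _ ≤ R + R := add_le_add hcu (by rw [edist_comm]; exact hc i)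
      _ = 2 * R := (two_mul R).symm
  push Not at hshared
  have hcard : #(C.erase cu) < #(univ : Finset (Fin k)) := by
    simpa using (card_erase_lt_of_mem hcuC).trans_le hC
  obtain ⟨i, -, j, -, hne, hij⟩ := exists_ne_map_eq_of_card_lt_of_maps_to hcard
    (f := c) fun i _ => mem_erase.2 ⟨hshared i, hcC i⟩
  wlog hji : j < i generalizing i j
  · exact this j i hne.symm hij.symm (hne.lt_or_gt.resolve_right hji)
  calc (univ.inf fun i => edist u (a i))
      ≤ edist (a i) (a j) := ha.inf_edist_le_edist hji u
    _ ≤ edist (a i) (c i) + edist (c j) (a j) := hij ▸ edist_triangle _ _ _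
    _ ≤ R + R := add_le_add (hc i) (by rw [edist_comm]; exact hc j)
    _ = 2 * R := (two_mul R).symm

end IsFarthestFirstTraversal

theorem Finset.exists_mem_edist_le_sup_inf {C : Finset V} (hC : C.Nonempty) (s : Finset V)
    {x : V} (hx : x ∈ s) : ∃ c ∈ C, edist x c ≤ s.sup fun y => C.inf fun c => edist y c := by
  obtain ⟨c, hc, hxc⟩ := exists_mem_eq_inf C hC fun c => edist x c
  exact ⟨c, hc, hxc ▸ le_sup (f := fun y => C.inf fun c => edist y c) hx⟩

end

theorem farthest_first_two_approx_general {V : Type*} [MetricSpace V] [Fintype V]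
    (k : ℕ)
    (a : Fin k → V)
    -- farthest-first traversal: each `a i` maximizes the distance to the previous points
    (hgreedy : ∀ i : Fin k, ∀ u : V,
      ((Finset.univ.filter (fun j => j < i)).inf fun j => edist u (a j)) ≤
        ((Finset.univ.filter (fun j => j < i)).inf fun j => edist (a i) (a j))) :
    ∀ C : Finset V, C.card = k →
      (Finset.univ.sup fun u => Finset.univ.inf fun i => edist u (a i)) ≤
        2 * Finset.univ.sup fun u => C.inf fun v => edist u v := by
  intro C hC
  refine Finset.sup_le fun u hu => ?_
  rcases C.eq_empty_or_nonempty with rfl | hCne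
  · simp [sup_const ⟨u, hu⟩]
  exact IsFarthestFirstTraversal.inf_edist_le_two_mul hgreedy hC.le
    (fun x => exists_mem_edist_le_sup_inf hCne univ (mem_univ x)) u

theorem farthest_first_two_approx {V : Type*} [MetricSpace V] [Fintype V] [Nonempty V]
    (k : ℕ) (hk : 1 ≤ k) (hk' : k ≤ Fintype.card V)
    (a : Fin k → V)
    -- farthest-first traversal: each `a i` maximizes the distance to the previous points
    (hgreedy : ∀ i : Fin k, ∀ u : V,
      ((Finset.univ.filter (fun j => j < i)).inf fun j => edist u (a j)) ≤
        ((Finset.univ.filter (fun j => j < i)).inf fun j => edist (a i) (a j))) :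
    ∀ C : Finset V, C.card = k →
      (Finset.univ.sup fun u => Finset.univ.inf fun i => edist u (a i)) ≤
        2 * Finset.univ.sup fun u => C.inf fun v => edist u v :=
  farthest_first_two_approx_general k a hgreedy
end

section
/- In the farthest-first traversal on a finite metric space, if the algorithm is run to select k+1 points a₁,…,a_{k+1}, then any two selected points are at distance at least r_A apart, where r_A is the coverage radius of the first k points. Consequently, with k+1 points that are pairwise at distance ≥ r_A and only k optimal centers, two of these points share a center, yielding r_A ≤ 2 r* by the triangle inequality. -/
open Finset
open scoped ENNReal

/-!
Each greedy point `a i` is, by the farthest-first choice, at least as far from its predecessors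
as any other point of the space is; since its predecessors are among the first `k` points, it is
at distance at least `r_A` from each of them. Given `k` centers `C`, two of the `k + 1` greedy
points share a nearest center by pigeonhole, and the triangle inequality through that center
bounds their distance, hence `r_A`, by `2 r*`.
-/

theorem Fin.inf_castSucc_le_inf_filter_lt {α : Type*} [SemilatticeInf α] [OrderTop α] {k : ℕ}
    (f : Fin (k + 1) → α) (i : Fin (k + 1)) :
    (univ.inf fun j : Fin k => f j.castSucc) ≤ (univ.filter (· < i)).inf f := by
  refine Finset.le_inf fun j hj => ?_
  have hj_ne_last : j ≠ Fin.last k := (lt_of_lt_of_le (mem_filter.mp hj).2 i.le_last).ne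
  simpa using inf_le (f := fun j : Fin k => f j.castSucc) (mem_univ (j.castPred hj_ne_last))

def IsFarthestFirst {V : Type*} [PseudoEMetricSpace V] {n : ℕ} (a : Fin n → V) : Prop :=
  ∀ i u, ((univ.filter (· < i)).inf fun j => edist u (a j)) ≤
    (univ.filter (· < i)).inf fun j => edist (a i) (a j)

section FarthestFirst

variable {V : Type*} [PseudoEMetricSpace V] {k : ℕ} {a : Fin (k + 1) → V}

theorem inf_edist_castSucc_le_edist_of_farthest_first
    (hgreedy : IsFarthestFirst a) (u : V) {i j : Fin (k + 1)} (hji : j < i) :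
    (univ.inf fun l : Fin k => edist u (a l.castSucc)) ≤ edist (a i) (a j) :=
  calc (univ.inf fun l : Fin k => edist u (a l.castSucc))
      ≤ (univ.filter (· < i)).inf fun l => edist u (a l) :=
        Fin.inf_castSucc_le_inf_filter_lt (fun l => edist u (a l)) i
    _ ≤ (univ.filter (· < i)).inf fun l => edist (a i) (a l) := hgreedy i u
    _ ≤ edist (a i) (a j) := inf_le (by simpa using hji)

theorem sup_inf_edist_castSucc_le_edist_of_farthest_first [Fintype V]
    (hgreedy : IsFarthestFirst a) {i j : Fin (k + 1)} (hij : i ≠ j) :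
    (univ.sup fun u => univ.inf fun l : Fin k => edist u (a l.castSucc)) ≤ edist (a i) (a j) := by
  refine Finset.sup_le fun u _ => ?_
  rcases hij.lt_or_gt with hij | hji
  · rw [edist_comm]
    exact inf_edist_castSucc_le_edist_of_farthest_first hgreedy u hij
  · exact inf_edist_castSucc_le_edist_of_farthest_first hgreedy u hji

end FarthestFirst

theorem le_two_mul_of_pairwise_le_edist_of_card_lt {V ι : Type*} [PseudoEMetricSpace V]
    [Fintype ι] {x : ι → V} {C : Finset V} {ρ r : ℝ≥0∞}
    (hsep : ∀ i j, i ≠ j → ρ ≤ edist (x i) (x j)) (hcard : C.card < Fintype.card ι)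
    (hr : ∀ i, (C.inf fun v => edist (x i) v) ≤ r) :
    ρ ≤ 2 * r := by
  obtain rfl | hC := C.eq_empty_or_nonempty
  · obtain ⟨i⟩ : Nonempty ι := Fintype.card_pos_iff.mp (by simpa using hcard)
    have hr_top : r = ⊤ := top_le_iff.mp (by simpa using hr i)
    simp [hr_top, ENNReal.mul_top two_ne_zero]
  have hnearest : ∀ i, ∃ v ∈ C, edist (x i) v ≤ r := fun i => by
    obtain ⟨v, hv, hv_eq⟩ := C.exists_mem_eq_inf hC fun v => edist (x i) v
    exact ⟨v, hv, hv_eq ▸ hr i⟩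
  choose c hcC hc using hnearest
  obtain ⟨i, -, j, -, hij, hcij⟩ :=
    exists_ne_map_eq_of_card_lt_of_maps_to (s := univ) (t := C) (by simpa using hcard)
      fun i _ => hcC i
  calc ρ ≤ edist (x i) (x j) := hsep i j hij
    _ ≤ edist (x i) (c i) + edist (x j) (c j) := by
        rw [hcij, edist_comm (x j)]; exact edist_triangle _ _ _
    _ ≤ r + r := add_le_add (hc i) (hc j)
    _ = 2 * r := (two_mul r).symm

theorem farthest_first_separation_general {V : Type*} [MetricSpace V] [Fintype V]
    (k : ℕ)
    (a : Fin (k + 1) → V)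
    -- farthest-first traversal run to select `k+1` points
    (hgreedy : ∀ i : Fin (k + 1), ∀ u : V,
      ((Finset.univ.filter (fun j => j < i)).inf fun j => edist u (a j)) ≤
        ((Finset.univ.filter (fun j => j < i)).inf fun j => edist (a i) (a j))) :
    -- coverage radius of the first `k` points
    (∀ i j : Fin (k + 1), i ≠ j →
      (Finset.univ.sup fun u => Finset.univ.inf fun i : Fin k => edist u (a i.castSucc)) ≤
        edist (a i) (a j)) ∧
    ∀ C : Finset V, C.card = k →
      (Finset.univ.sup fun u => Finset.univ.inf fun i : Fin k => edist u (a i.castSucc)) ≤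
        2 * Finset.univ.sup fun u => C.inf fun v => edist u v := by
  have hsep := fun i j (hij : i ≠ j) =>
    sup_inf_edist_castSucc_le_edist_of_farthest_first hgreedy hij
  refine ⟨hsep, fun C hC => le_two_mul_of_pairwise_le_edist_of_card_lt hsep (by simp [hC])
    fun i => le_sup (f := fun u => C.inf fun v => edist u v) (mem_univ (a i))⟩

theorem farthest_first_separation {V : Type*} [MetricSpace V] [Fintype V] [Nonempty V]
    (k : ℕ) (hk : 1 ≤ k) (hk' : k + 1 ≤ Fintype.card V)
    (a : Fin (k + 1) → V)
    -- farthest-first traversal run to select `k+1` points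
    (hgreedy : ∀ i : Fin (k + 1), ∀ u : V,
      ((Finset.univ.filter (fun j => j < i)).inf fun j => edist u (a j)) ≤
        ((Finset.univ.filter (fun j => j < i)).inf fun j => edist (a i) (a j))) :
    -- coverage radius of the first `k` points
    (∀ i j : Fin (k + 1), i ≠ j →
      (Finset.univ.sup fun u => Finset.univ.inf fun i : Fin k => edist u (a i.castSucc)) ≤
        edist (a i) (a j)) ∧
    ∀ C : Finset V, C.card = k →
      (Finset.univ.sup fun u => Finset.univ.inf fun i : Fin k => edist u (a i.castSucc)) ≤
        2 * Finset.univ.sup fun u => C.inf fun v => edist u v :=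
  farthest_first_separation_general k a hgreedy
end
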